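/- Strong law for visit frequencies of an irreducible finite-state Markov chain (equation (map2)): let P be an irreducible stochastic matrix on a finite nonempty type X with stationary probability vector π, and let (X_i)_{i≥1} be a Markov chain with transition matrix P and arbitrary initial distribution. Then for every x ∈ X, almost surely the empirical visit frequency W^{−1} · ∑_{i=1}^{W} 1[X_i = x] converges to π(x) as W → ∞. -/

import Mathlib

open MeasureTheory Filter

/-- A stochastic matrix on a finite type: nonnegative entries, rows summing to one. -/
def IsStochastic {X : Type*} [Fintype X] (P : X → X → ℝ) : Prop :=
  (∀ x y, 0 ≤ P x y) ∧ ∀ x, ∑ y, P x y = 1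

/-- Irreducibility: any state can be reached from any state in some number `n ≥ 1` of steps. -/
def IsIrreducibleMC {X : Type*} [Fintype X] [DecidableEq X] (P : X → X → ℝ) : Prop :=
  ∀ x y, ∃ n : ℕ, 1 ≤ n ∧ 0 < (Matrix.of P ^ n) x y

/-- A stationary probability vector for `P`: nonnegative, summing to one, and invariant. -/
def IsStationaryProbVector {X : Type*} [Fintype X] (P : X → X → ℝ) (π : X → ℝ) : Prop :=
  (∀ x, 0 ≤ π x) ∧ (∑ x, π x = 1) ∧ ∀ y, π y = ∑ x, π x * P x y

/-- `Xs` is a Markov chain with transition matrix `P` (and arbitrary initial distribution):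
each `Xs t` is measurable, and conditional on any history of positive probability the next
state is distributed according to `P`, expressed in product form. -/
def IsMarkovChain {X : Type*} [Fintype X] [MeasurableSpace X] [MeasurableSingletonClass X]
    {Ω : Type*} [MeasurableSpace Ω] (μ : Measure Ω)
    (P : X → X → ℝ) (Xs : ℕ → Ω → X) : Prop :=
  (∀ t, Measurable (Xs t)) ∧
  ∀ (t : ℕ) (path : ℕ → X) (y : X),
    μ {ω | ∀ s ≤ t, Xs s ω = path s} ≠ 0 →
    (μ {ω | (∀ s ≤ t, Xs s ω = path s) ∧ Xs (t + 1) ω = y}).toReal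
      = (μ {ω | ∀ s ≤ t, Xs s ω = path s}).toReal * P (path t) y

/-!
Write `S_W` for the number of visits to `x` at times `1, …, W` and `Π` for the matrix whose rows
all equal `π`. Irreducibility makes `1 - P + Π` invertible, and since `(P - Π) ^ k = P ^ k - Π`
for `k ≥ 1`, the partial sums `∑_{k ≤ m} (P ^ k a b - π b)` stay bounded by some `C`. Hence
`|E S_W - W π x| ≤ C`, and writing the covariance of the visits at times `i < j` as
`p_i (P ^ (j - i) x x - p_j)` gives `Var S_W ≤ (1 + 6 C) W`. Chebyshev's inequality and
Borel–Cantelli then yield `S_{m²} / m² → π x` almost surely, and monotonicity of `W ↦ S_W`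
fills the gaps between squares.
-/

open ProbabilityTheory Finset Topology
open scoped Matrix ENNReal

namespace IsStochastic

variable {X : Type*} [Fintype X] {P : X → X → ℝ}

lemma pow_apply_nonneg [DecidableEq X] (hP : IsStochastic P) (n : ℕ) (a b : X) :
    0 ≤ (Matrix.of P ^ n) a b := by
  induction n generalizing a b with
  | zero => by_cases h : a = b <;> simp [h]
  | succ n ih =>
    rw [pow_succ, Matrix.mul_apply]
    exact sum_nonneg fun c _ => mul_nonneg (ih a c) (hP.1 c b)

lemma sum_pow_apply [DecidableEq X] (hP : IsStochastic P) (n : ℕ) (a : X) :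
    ∑ b, (Matrix.of P ^ n) a b = 1 := by
  induction n with
  | zero => simp [Matrix.one_apply]
  | succ n ih =>
    simp only [pow_succ, Matrix.mul_apply, Matrix.of_apply]
    rw [sum_comm]
    simp_rw [← mul_sum, hP.2, mul_one]
    exact ih

lemma pow_apply_le_one [DecidableEq X] (hP : IsStochastic P) (n : ℕ) (a b : X) :
    (Matrix.of P ^ n) a b ≤ 1 :=
  (single_le_sum (fun c _ => hP.pow_apply_nonneg n a c) (mem_univ b)).trans_eq
    (hP.sum_pow_apply n a)

lemma mul_replicateRow (hP : IsStochastic P) (π : X → ℝ) :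
    Matrix.of P * Matrix.replicateRow X π = Matrix.replicateRow X π := by
  ext a b
  simp [Matrix.mul_apply, Matrix.replicateRow_apply, ← sum_mul, hP.2]

/-- Maximum principle: a harmonic function attains its maximum at every state reachable from a
maximiser, hence everywhere when `P` is irreducible. -/
lemma apply_eq_of_mulVec_eq [DecidableEq X] (hP : IsStochastic P) (hirr : IsIrreducibleMC P)
    {v : X → ℝ} (hv : Matrix.of P *ᵥ v = v) (a b : X) : v a = v b := by
  obtain ⟨m, -, hm⟩ := exists_max_image univ v ⟨a, mem_univ a⟩
  have hpow : ∀ n, (Matrix.of P ^ n) *ᵥ v = v := by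
    intro n
    induction n with
    | zero => simp
    | succ n ih => rw [pow_succ, ← Matrix.mulVec_mulVec, hv, ih]
  have reach : ∀ n y, 0 < (Matrix.of P ^ n) m y → v y = v m := by
    intro n y hpos
    by_contra hne
    have hlt : ∑ c, (Matrix.of P ^ n) m c * v c < ∑ c, (Matrix.of P ^ n) m c * v m :=
      sum_lt_sum (fun c _ => mul_le_mul_of_nonneg_left (hm c (mem_univ c))
          (hP.pow_apply_nonneg n m c))
        ⟨y, mem_univ y, mul_lt_mul_of_pos_left
          (lt_of_le_of_ne (hm y (mem_univ y)) hne) hpos⟩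
    rw [← sum_mul, hP.sum_pow_apply, one_mul] at hlt
    exact hlt.ne (congrFun (hpow n) m)
  obtain ⟨n, -, hn⟩ := hirr m a
  obtain ⟨n', -, hn'⟩ := hirr m b
  rw [reach n a hn, reach n' b hn']

end IsStochastic

namespace IsStationaryProbVector

variable {X : Type*} [Fintype X] {P : X → X → ℝ} {π : X → ℝ}

lemma apply_le_one (hπ : IsStationaryProbVector P π) (a : X) : π a ≤ 1 :=
  (single_le_sum (fun b _ => hπ.1 b) (mem_univ a)).trans_eq hπ.2.1

lemma vecMul_eq (hπ : IsStationaryProbVector P π) : π ᵥ* Matrix.of P = π := by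
  ext b
  exact (hπ.2.2 b).symm

lemma replicateRow_mul_pow [DecidableEq X] (hπ : IsStationaryProbVector P π) (n : ℕ) :
    Matrix.replicateRow X π * Matrix.of P ^ n = Matrix.replicateRow X π := by
  induction n with
  | zero => simp
  | succ n ih =>
    rw [pow_succ, ← mul_assoc, ih, ← Matrix.replicateRow_vecMul, hπ.vecMul_eq]

lemma replicateRow_mul_self (hπ : IsStationaryProbVector P π) :
    Matrix.replicateRow X π * Matrix.replicateRow X π = Matrix.replicateRow X π := by
  ext a b
  simp [Matrix.mul_apply, Matrix.replicateRow_apply, ← sum_mul, hπ.2.1]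

lemma sub_replicateRow_pow_succ [DecidableEq X] (hP : IsStochastic P)
    (hπ : IsStationaryProbVector P π) (n : ℕ) :
    (Matrix.of P - Matrix.replicateRow X π) ^ (n + 1)
      = Matrix.of P ^ (n + 1) - Matrix.replicateRow X π := by
  induction n with
  | zero => simp
  | succ n ih =>
    rw [pow_succ', ih, sub_mul, mul_sub, mul_sub, ← pow_succ', hP.mul_replicateRow,
      hπ.replicateRow_mul_pow, hπ.replicateRow_mul_self]
    abel

/-- Invertibility of Kemeny–Snell's fundamental matrix `1 - P + Π`: a kernel vector is harmonic
with `π`-mean zero, hence constant and zero. -/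
lemma isUnit_det_fundamental [DecidableEq X] (hP : IsStochastic P) (hirr : IsIrreducibleMC P)
    (hπ : IsStationaryProbVector P π) :
    IsUnit (1 - (Matrix.of P - Matrix.replicateRow X π)).det := by
  refine isUnit_iff_ne_zero.2 fun hdet => ?_
  obtain ⟨v, hv0, hv⟩ := Matrix.exists_mulVec_eq_zero_iff.2 hdet
  have hRv : Matrix.replicateRow X π *ᵥ v = fun _ => π ⬝ᵥ v := by
    ext a
    simp [Matrix.mulVec, dotProduct, Matrix.replicateRow_apply]
  have hPv : Matrix.of P *ᵥ v = v + fun _ => π ⬝ᵥ v := by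
    rw [Matrix.sub_mulVec, Matrix.sub_mulVec, Matrix.one_mulVec, hRv] at hv
    ext a
    have := congrFun hv a
    simp only [Pi.sub_apply, Pi.zero_apply] at this
    simp only [Pi.add_apply]
    linarith
  have hmean : π ⬝ᵥ v = 0 := by
    have h := congrArg (π ⬝ᵥ ·) hPv
    simp only [Matrix.dotProduct_mulVec, hπ.vecMul_eq, dotProduct_add] at h
    simpa [dotProduct, ← sum_mul, hπ.2.1] using h
  have hconst := hP.apply_eq_of_mulVec_eq hirr (v := v) (by rw [hPv, hmean]; exact add_zero v)
  refine hv0 (funext fun a => ?_)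
  calc v a = π ⬝ᵥ fun _ => v a := by simp [dotProduct, ← sum_mul, hπ.2.1]
    _ = 0 := by rw [← hmean]; exact congrArg (π ⬝ᵥ ·) (funext fun b => hconst a b)

end IsStationaryProbVector

lemma Matrix.exists_abs_sum_range_pow_apply_le {n : Type*} [Fintype n] [DecidableEq n]
    {Q : Matrix n n ℝ} (hQ : IsUnit (1 - Q).det) {B : ℝ} (hB : ∀ k i j, |(Q ^ k) i j| ≤ B) :
    ∃ C, ∀ m i j, |(∑ k ∈ range m, Q ^ k) i j| ≤ C := by
  set Z := (1 - Q)⁻¹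
  refine ⟨2 * B * ∑ i, ∑ c, |Z i c|, fun m i j => ?_⟩
  have hsum : ∑ k ∈ range m, Q ^ k = Z * (Q ^ 0 - Q ^ m) := by
    rw [pow_zero, ← mul_neg_geom_sum, ← mul_assoc, Matrix.nonsing_inv_mul _ hQ, one_mul]
  have hB0 : 0 ≤ B := (abs_nonneg _).trans (hB 0 i j)
  calc |(∑ k ∈ range m, Q ^ k) i j| ≤ ∑ c, |Z i c| * |(Q ^ 0 - Q ^ m) c j| := by
        rw [hsum, Matrix.mul_apply]
        exact (abs_sum_le_sum_abs _ _).trans_eq (by simp only [abs_mul])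
    _ ≤ ∑ c, |Z i c| * (2 * B) := by
        gcongr with c
        exact (abs_sub _ _).trans (by linarith [hB 0 c j, hB m c j])
    _ ≤ 2 * B * ∑ i, ∑ c, |Z i c| := by
        rw [← sum_mul, mul_comm]
        exact mul_le_mul_of_nonneg_left (single_le_sum (f := fun i => ∑ c, |Z i c|)
          (fun _ _ => sum_nonneg fun _ _ => abs_nonneg _) (mem_univ i)) (by positivity)

theorem IsIrreducibleMC.exists_abs_sum_pow_apply_sub_le {X : Type*} [Fintype X] [DecidableEq X]
    {P : X → X → ℝ} {π : X → ℝ} (hirr : IsIrreducibleMC P) (hP : IsStochastic P)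
    (hπ : IsStationaryProbVector P π) :
    ∃ C, ∀ m a b, |∑ k ∈ Ioc 0 m, ((Matrix.of P ^ k) a b - π b)| ≤ C := by
  set Q := Matrix.of P - Matrix.replicateRow X π
  have hQ : ∀ k a b, |(Q ^ k) a b| ≤ 1 := by
    rintro (_ | k) a b
    · by_cases h : a = b <;> simp [h]
    · rw [hπ.sub_replicateRow_pow_succ hP, Matrix.sub_apply, Matrix.replicateRow_apply, abs_le]
      constructor <;>
        linarith [hP.pow_apply_nonneg (k + 1) a b, hP.pow_apply_le_one (k + 1) a b,
          hπ.1 b, hπ.apply_le_one b]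
  obtain ⟨C, hC⟩ := Matrix.exists_abs_sum_range_pow_apply_le
    (hπ.isUnit_det_fundamental hP hirr) hQ
  refine ⟨C + 1, fun m a b => ?_⟩
  have hsplit : (∑ k ∈ range (m + 1), Q ^ k) a b
      = (1 : Matrix X X ℝ) a b + ∑ k ∈ Ioc 0 m, ((Matrix.of P ^ k) a b - π b) := by
    rw [range_eq_Ico, sum_eq_sum_Ico_succ_bot (by omega), Matrix.add_apply, pow_zero,
      Matrix.sum_apply]
    congr 1
    refine sum_congr (by ext; simp; omega) fun k hk => ?_
    obtain ⟨k, rfl⟩ := Nat.exists_eq_add_of_lt (mem_Ioc.1 hk).1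
    rw [hπ.sub_replicateRow_pow_succ hP, Matrix.sub_apply, Matrix.replicateRow_apply]
  have h1 : |(1 : Matrix X X ℝ) a b| ≤ 1 := by
    rw [Matrix.one_apply]; split_ifs <;> norm_num
  have := hC (m + 1) a b
  rw [hsplit] at this
  calc _ = |(1 : Matrix X X ℝ) a b + ∑ k ∈ Ioc 0 m, ((Matrix.of P ^ k) a b - π b)
        - (1 : Matrix X X ℝ) a b| := by rw [add_sub_cancel_left]
    _ ≤ C + 1 := (abs_sub _ _).trans (by linarith)

section MarkovChain

variable {X : Type*} [Fintype X] [MeasurableSpace X] [MeasurableSingletonClass X]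
  {Ω : Type*} [MeasurableSpace Ω] {μ : Measure Ω}

lemma measureReal_eq_sum_inter_preimage [IsFiniteMeasure μ] {f : Ω → X} (hf : Measurable f)
    (A : Set Ω) :
    μ.real A = ∑ c, μ.real (A ∩ f ⁻¹' {c}) := by
  have h := sum_measureReal_preimage_singleton (μ := μ.restrict A) univ
    (fun c _ => hf (measurableSet_singleton c))
  simp only [coe_univ, Set.preimage_univ, measureReal_restrict_apply_univ,
    measureReal_restrict_apply (hf (measurableSet_singleton _))] at h
  rw [← h]
  simp only [Set.inter_comm]

namespace IsMarkovChain

variable {P : X → X → ℝ} {Xs : ℕ → Ω → X}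

lemma measurableSet_eq (hchain : IsMarkovChain μ P Xs) (i : ℕ) (a : X) :
    MeasurableSet {ω | Xs i ω = a} :=
  hchain.1 i (measurableSet_singleton a)

lemma sum_measureReal_eq_one [IsProbabilityMeasure μ] (hchain : IsMarkovChain μ P Xs) (i : ℕ) :
    ∑ a, μ.real {ω | Xs i ω = a} = 1 := by
  have h := measureReal_eq_sum_inter_preimage (μ := μ) (hchain.1 i) Set.univ
  simp only [probReal_univ, Set.univ_inter] at h
  exact h.symm

lemma measureReal_cylinder_inter (hchain : IsMarkovChain μ P Xs) (t : ℕ) (p : ℕ → X) (y : X) :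
    μ.real ({ω | ∀ s ≤ t, Xs s ω = p s} ∩ {ω | Xs (t + 1) ω = y})
      = μ.real {ω | ∀ s ≤ t, Xs s ω = p s} * P (p t) y := by
  by_cases h : μ {ω | ∀ s ≤ t, Xs s ω = p s} = 0
  · simp [measureReal_def, h, measure_mono_null Set.inter_subset_left h]
  · exact hchain.2 t p y h

lemma measureReal_inter_succ [IsFiniteMeasure μ] (hchain : IsMarkovChain μ P Xs) {t : ℕ}
    {S : Set (Fin (t + 1) → X)} {c : X} (hS : ∀ v ∈ S, v (Fin.last t) = c) (y : X) :
    μ.real ({ω | (fun s : Fin (t + 1) => Xs s ω) ∈ S} ∩ {ω | Xs (t + 1) ω = y})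
      = μ.real {ω | (fun s : Fin (t + 1) => Xs s ω) ∈ S} * P c y := by
  classical
  set H : Ω → Fin (t + 1) → X := fun ω s => Xs s ω
  have hH : Measurable H := measurable_pi_lambda _ fun s => hchain.1 s
  have hcyl : ∀ v, μ.real (H ⁻¹' {v} ∩ {ω | Xs (t + 1) ω = y})
      = μ.real (H ⁻¹' {v}) * P (v (Fin.last t)) y := by
    intro v
    have hv : H ⁻¹' {v} = {ω | ∀ s ≤ t, Xs s ω = v ⟨min s t, by omega⟩} := by
      ext ω
      simp only [Set.mem_preimage, Set.mem_singleton_iff, Set.mem_ofPred_eq, funext_iff,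
        Fin.forall_iff, Nat.lt_succ_iff]
      exact forall₂_congr fun s hs => by simp [H, min_eq_left hs]
    rw [hv, hchain.measureReal_cylinder_inter]
    simp [Fin.last]
  change μ.real (H ⁻¹' S ∩ _) = μ.real (H ⁻¹' S) * P c y
  rw [measureReal_eq_sum_inter_preimage hH, measureReal_eq_sum_inter_preimage hH (H ⁻¹' S),
    sum_mul]
  refine sum_congr rfl fun v _ => ?_
  by_cases hv : v ∈ S
  · have hsub : H ⁻¹' {v} ⊆ H ⁻¹' S := Set.preimage_mono (Set.singleton_subset_iff.2 hv)
    rw [Set.inter_right_comm, Set.inter_eq_right.2 hsub, hcyl, hS v hv]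
  · have hdisj : H ⁻¹' S ∩ H ⁻¹' {v} = ∅ := by
      ext ω
      simp only [Set.mem_inter_iff, Set.mem_preimage, Set.mem_singleton_iff,
        Set.mem_empty_iff_false, iff_false, not_and]
      exact fun hω hωv => hv (hωv ▸ hω)
    simp [Set.inter_right_comm _ {ω | Xs (t + 1) ω = y}, hdisj]

variable [DecidableEq X] [IsFiniteMeasure μ]

lemma measureReal_inter_eq_mul_pow (hchain : IsMarkovChain μ P Xs) (i k : ℕ) (a b : X) :
    μ.real ({ω | Xs i ω = a} ∩ {ω | Xs (i + k) ω = b})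
      = μ.real {ω | Xs i ω = a} * (Matrix.of P ^ k) a b := by
  induction k generalizing b with
  | zero =>
    rw [add_zero, pow_zero, Matrix.one_apply]
    split_ifs with hab
    · rw [hab, Set.inter_self, mul_one]
    · have : {ω | Xs i ω = a} ∩ {ω | Xs i ω = b} = ∅ :=
        Set.eq_empty_of_forall_notMem fun ω h => hab (h.1.symm.trans h.2)
      simp [this]
  | succ k ih =>
    have hstep : ∀ c, μ.real ({ω | Xs i ω = a} ∩ {ω | Xs (i + (k + 1)) ω = b}
        ∩ Xs (i + k) ⁻¹' {c}) = μ.real {ω | Xs i ω = a} * (Matrix.of P ^ k) a c * P c b := by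
      intro c
      have h := hchain.measureReal_inter_succ
        (S := {v : Fin (i + k + 1) → X | v ⟨i, by omega⟩ = a ∧ v (Fin.last (i + k)) = c})
        (fun v hv => hv.2) b
      change μ.real ({ω | Xs i ω = a} ∩ {ω | Xs (i + k) ω = c} ∩ {ω | Xs (i + k + 1) ω = b})
        = μ.real ({ω | Xs i ω = a} ∩ {ω | Xs (i + k) ω = c}) * P c b at h
      rw [Set.inter_right_comm, ← ih c]
      exact h
    rw [measureReal_eq_sum_inter_preimage (hchain.1 (i + k)), pow_succ]
    simp only [hstep, Matrix.mul_apply, Matrix.of_apply, mul_sum, mul_assoc]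

lemma measureReal_eq_sum_mul_pow (hchain : IsMarkovChain μ P Xs) (i : ℕ) (b : X) :
    μ.real {ω | Xs i ω = b} = ∑ a, μ.real {ω | Xs 0 ω = a} * (Matrix.of P ^ i) a b := by
  rw [measureReal_eq_sum_inter_preimage (hchain.1 0)]
  refine sum_congr rfl fun a _ => ?_
  rw [← hchain.measureReal_inter_eq_mul_pow, zero_add, Set.inter_comm]
  rfl

end IsMarkovChain

end MarkovChain

lemma Finset.sum_sum_eq_sum_add_two_mul_sum_lt {ι R : Type*} [LinearOrder ι] [NonAssocSemiring R]
    (s : Finset ι) {g : ι → ι → R} (hg : ∀ i j, g i j = g j i) :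
    ∑ i ∈ s, ∑ j ∈ s, g i j = ∑ i ∈ s, (g i i + 2 * ∑ j ∈ s with i < j, g i j) := by
  have hsplit : ∀ i j, g i j = (if i < j then g i j else 0) + (if j < i then g j i else 0)
      + (if i = j then g i j else 0) := by
    intro i j
    rcases lt_trichotomy i j with h | rfl | h
    · simp [h, h.not_gt, h.ne]
    · simp
    · simp [h, h.not_gt, h.ne', hg i j]
  have hswap : ∑ i ∈ s, ∑ j ∈ s, (if j < i then g j i else 0)
      = ∑ i ∈ s, ∑ j ∈ s, (if i < j then g i j else 0) := sum_comm
  have hdiag : ∑ i ∈ s, ∑ j ∈ s, (if i = j then g i j else 0) = ∑ i ∈ s, g i i :=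
    sum_congr rfl fun i hi => by rw [sum_ite_eq, if_pos hi]
  calc ∑ i ∈ s, ∑ j ∈ s, g i j
      = ∑ i ∈ s, ∑ j ∈ s, (if i < j then g i j else 0)
        + ∑ i ∈ s, ∑ j ∈ s, (if j < i then g j i else 0)
        + ∑ i ∈ s, ∑ j ∈ s, (if i = j then g i j else 0) := by
        simp only [← sum_add_distrib]
        exact sum_congr rfl fun i _ => sum_congr rfl fun j _ => hsplit i j
    _ = _ := by
        rw [hswap, hdiag]
        simp only [← sum_filter, sum_add_distrib, two_mul]
        abel

section VisitCount

variable {X Ω : Type*}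

noncomputable def visitCount (Xs : ℕ → Ω → X) (x : X) (W : ℕ) : Ω → ℝ :=
  fun ω => ∑ i ∈ Ioc 0 W, {ω | Xs i ω = x}.indicator 1 ω

lemma visitCount_zero (Xs : ℕ → Ω → X) (x : X) (ω : Ω) : visitCount Xs x 0 ω = 0 := by
  simp [visitCount]

lemma monotone_visitCount (Xs : ℕ → Ω → X) (x : X) (ω : Ω) :
    Monotone fun W => visitCount Xs x W ω :=
  fun _ _ hVW => sum_le_sum_of_subset_of_nonneg (Ioc_subset_Ioc_right hVW)
    fun _ _ _ => Set.indicator_nonneg (fun _ _ => zero_le_one) ω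

variable [MeasurableSpace Ω] {μ : Measure Ω}

lemma memLp_indicator_one [IsFiniteMeasure μ] {A : Set Ω} (hA : MeasurableSet A) (p : ℝ≥0∞) :
    MemLp (A.indicator (1 : Ω → ℝ)) p μ :=
  (memLp_const 1).indicator hA

lemma covariance_indicator_one [IsProbabilityMeasure μ] {A B : Set Ω} (hA : MeasurableSet A)
    (hB : MeasurableSet B) :
    cov[A.indicator 1, B.indicator 1; μ] = μ.real (A ∩ B) - μ.real A * μ.real B := by
  rw [covariance_eq_sub (memLp_indicator_one hA 2) (memLp_indicator_one hB 2),
    ← Set.inter_indicator_one, integral_indicator_one (hA.inter hB), integral_indicator_one hA,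
    integral_indicator_one hB]

end VisitCount

namespace IsMarkovChain

variable {X : Type*} [Fintype X] [MeasurableSpace X] [MeasurableSingletonClass X]
  {Ω : Type*} [MeasurableSpace Ω] {μ : Measure Ω} [IsProbabilityMeasure μ]
  {P : X → X → ℝ} {Xs : ℕ → Ω → X}

lemma memLp_visitCount (hchain : IsMarkovChain μ P Xs) (x : X) (W : ℕ) :
    MemLp (visitCount Xs x W) 2 μ :=
  memLp_finsetSum _ fun i _ => memLp_indicator_one (hchain.measurableSet_eq i x) 2

lemma integral_visitCount (hchain : IsMarkovChain μ P Xs) (x : X) (W : ℕ) :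
    μ[visitCount Xs x W] = ∑ i ∈ Ioc 0 W, μ.real {ω | Xs i ω = x} := by
  simp only [visitCount]
  rw [integral_finsetSum _ fun i _ =>
    (memLp_indicator_one (hchain.measurableSet_eq i x) 1).integrable le_rfl]
  exact sum_congr rfl fun i _ => integral_indicator_one (hchain.measurableSet_eq i x)

lemma variance_visitCount (hchain : IsMarkovChain μ P Xs) (x : X) (W : ℕ) :
    Var[visitCount Xs x W; μ] = ∑ i ∈ Ioc 0 W, ∑ j ∈ Ioc 0 W,
      (μ.real ({ω | Xs i ω = x} ∩ {ω | Xs j ω = x})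
        - μ.real {ω | Xs i ω = x} * μ.real {ω | Xs j ω = x}) := by
  unfold visitCount
  rw [variance_fun_sum' fun i _ => memLp_indicator_one (hchain.measurableSet_eq i x) 2]
  simp only [covariance_indicator_one (hchain.measurableSet_eq _ x)
    (hchain.measurableSet_eq _ x)]

variable [DecidableEq X] {π : X → ℝ} {C : ℝ}

/-- Averaging over the initial distribution transfers bounds on sums of `P ^ j a x - π x` to the
marginals of the chain. -/
lemma abs_sum_measureReal_sub_le (hchain : IsMarkovChain μ P Xs) (x : X) (s : Finset ℕ)
    {B : ℝ} (hB : ∀ a, |∑ j ∈ s, ((Matrix.of P ^ j) a x - π x)| ≤ B) :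
    |∑ j ∈ s, (μ.real {ω | Xs j ω = x} - π x)| ≤ B := by
  set ν : X → ℝ := fun a => μ.real {ω | Xs 0 ω = a}
  have hν : ∑ a, ν a = 1 := hchain.sum_measureReal_eq_one 0
  have hsum : ∑ j ∈ s, (μ.real {ω | Xs j ω = x} - π x)
      = ∑ a, ν a * ∑ j ∈ s, ((Matrix.of P ^ j) a x - π x) := by
    simp only [mul_sum, mul_sub]
    rw [sum_comm]
    refine sum_congr rfl fun j _ => ?_
    rw [sum_sub_distrib, ← sum_mul, hν, one_mul, hchain.measureReal_eq_sum_mul_pow]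
  calc |∑ j ∈ s, (μ.real {ω | Xs j ω = x} - π x)|
      ≤ ∑ a, ν a * |∑ j ∈ s, ((Matrix.of P ^ j) a x - π x)| := by
        rw [hsum]
        refine (abs_sum_le_sum_abs _ _).trans_eq (sum_congr rfl fun a _ => ?_)
        rw [abs_mul, abs_of_nonneg measureReal_nonneg]
    _ ≤ ∑ a, ν a * B := sum_le_sum fun a _ => mul_le_mul_of_nonneg_left (hB a) measureReal_nonneg
    _ = B := by rw [← sum_mul, hν, one_mul]

variable (hC : ∀ m a b, |∑ k ∈ Ioc 0 m, ((Matrix.of P ^ k) a b - π b)| ≤ C)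
include hC

lemma abs_integral_visitCount_sub_le (hchain : IsMarkovChain μ P Xs) (x : X) (W : ℕ) :
    |μ[visitCount Xs x W] - W * π x| ≤ C := by
  have h := hchain.abs_sum_measureReal_sub_le x (Ioc 0 W) fun a => hC W a x
  rwa [sum_sub_distrib, sum_const, Nat.card_Ioc, Nat.sub_zero, nsmul_eq_mul,
    ← hchain.integral_visitCount] at h

lemma abs_sum_pow_sub_measureReal_le (hchain : IsMarkovChain μ P Xs) (x : X) {i W : ℕ}
    (hiW : i ≤ W) :
    |∑ j ∈ Ioc i W, ((Matrix.of P ^ (j - i)) x x - μ.real {ω | Xs j ω = x})| ≤ 3 * C := by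
  have hshift : ∑ j ∈ Ioc i W, ((Matrix.of P ^ (j - i)) x x - π x)
      = ∑ k ∈ Ioc 0 (W - i), ((Matrix.of P ^ k) x x - π x) := by
    rw [← add_zero i, ← Nat.add_sub_cancel' hiW, ← map_add_left_Ioc, sum_map]
    simp
  have hmarg : |∑ j ∈ Ioc i W, (μ.real {ω | Xs j ω = x} - π x)| ≤ 2 * C := by
    refine hchain.abs_sum_measureReal_sub_le x _ fun a => ?_
    rw [eq_sub_of_add_eq' (sum_Ioc_consecutive (fun j => (Matrix.of P ^ j) a x - π x)
      (Nat.zero_le i) hiW), two_mul]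
    exact (abs_sub _ _).trans (add_le_add (hC W a x) (hC i a x))
  calc |∑ j ∈ Ioc i W, ((Matrix.of P ^ (j - i)) x x - μ.real {ω | Xs j ω = x})|
      = |∑ j ∈ Ioc i W, ((Matrix.of P ^ (j - i)) x x - π x)
          - ∑ j ∈ Ioc i W, (μ.real {ω | Xs j ω = x} - π x)| := by
        rw [← sum_sub_distrib]
        simp only [sub_sub_sub_cancel_right]
    _ ≤ C + 2 * C := (abs_sub _ _).trans (add_le_add (hshift ▸ hC (W - i) x x) hmarg)
    _ = 3 * C := by ring

lemma variance_visitCount_le (hchain : IsMarkovChain μ P Xs) (x : X) (W : ℕ) :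
    Var[visitCount Xs x W; μ] ≤ (1 + 6 * C) * W := by
  set p : ℕ → ℝ := fun i => μ.real {ω | Xs i ω = x}
  set g : ℕ → ℕ → ℝ := fun i j => μ.real ({ω | Xs i ω = x} ∩ {ω | Xs j ω = x}) - p i * p j
  have hg : ∀ i j, g i j = g j i := fun i j => by simp only [g, Set.inter_comm, mul_comm]
  have hrow : ∀ i j, i ≤ j → g i j = p i * ((Matrix.of P ^ (j - i)) x x - p j) := by
    intro i j hij
    obtain ⟨k, rfl⟩ := Nat.exists_eq_add_of_le hij
    simp only [g, hchain.measureReal_inter_eq_mul_pow, Nat.add_sub_cancel_left]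
    ring
  rw [hchain.variance_visitCount, sum_sum_eq_sum_add_two_mul_sum_lt _ hg]
  calc ∑ i ∈ Ioc 0 W, (g i i + 2 * ∑ j ∈ Ioc 0 W with i < j, g i j)
      ≤ ∑ i ∈ Ioc 0 W, (1 + 2 * (3 * C)) := sum_le_sum fun i hi => ?_
    _ = (1 + 6 * C) * W := by
        rw [sum_const, Nat.card_Ioc, Nat.sub_zero, nsmul_eq_mul]
        ring
  have hp : 0 ≤ p i ∧ p i ≤ 1 := ⟨measureReal_nonneg, measureReal_le_one⟩
  have hdiag : g i i ≤ 1 := by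
    rw [hrow i i le_rfl, Nat.sub_self, pow_zero, Matrix.one_apply_eq]
    nlinarith
  have hoff : ∑ j ∈ Ioc 0 W with i < j, g i j ≤ 3 * C := by
    have hfilter : {j ∈ Ioc 0 W | i < j} = Ioc i W := by
      ext j
      simp only [mem_filter, mem_Ioc] at hi ⊢
      omega
    rw [hfilter, sum_congr rfl fun j hj => hrow i j (mem_Ioc.1 hj).1.le, ← mul_sum]
    calc _ ≤ p i * |∑ j ∈ Ioc i W, ((Matrix.of P ^ (j - i)) x x - p j)| :=
          mul_le_mul_of_nonneg_left (le_abs_self _) hp.1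
      _ ≤ 1 * (3 * C) :=
          mul_le_mul hp.2 (hchain.abs_sum_pow_sub_measureReal_le hC x (mem_Ioc.1 hi).2)
            (abs_nonneg _) zero_le_one
      _ = 3 * C := one_mul _
  linarith

lemma tendsto_integral_visitCount_div (hchain : IsMarkovChain μ P Xs) (x : X) :
    Tendsto (fun W : ℕ => μ[visitCount Xs x W] / (W : ℝ)) atTop (𝓝 (π x)) := by
  refine tendsto_iff_norm_sub_tendsto_zero.2 <| squeeze_zero' (.of_forall fun _ => norm_nonneg _)
    ?_ (tendsto_const_div_atTop_nhds_zero_nat C)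
  filter_upwards [eventually_gt_atTop 0] with W hW
  have hW' : (0 : ℝ) < W := Nat.cast_pos.2 hW
  rw [Real.norm_eq_abs, div_sub' hW'.ne', abs_div, abs_of_pos hW']
  exact div_le_div_of_nonneg_right (hchain.abs_integral_visitCount_sub_le hC x W) hW'.le

end IsMarkovChain

/-- Monotone interpolation between consecutive squares `m ^ 2 ≤ n < (m + 1) ^ 2`, whose ratio
tends to `1`. -/
lemma tendsto_div_of_monotone_of_tendsto_div_sq {u : ℕ → ℝ} (hu : Monotone u) (hu0 : 0 ≤ u 0)
    {L : ℝ} (h : Tendsto (fun m : ℕ => u (m ^ 2) / (m ^ 2 : ℕ)) atTop (𝓝 L)) :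
    Tendsto (fun n : ℕ => u n / (n : ℝ)) atTop (𝓝 L) := by
  have hnonneg : ∀ n, 0 ≤ u n := fun n => hu0.trans (hu (Nat.zero_le n))
  set r : ℕ → ℝ := fun m => ((m ^ 2 : ℕ) : ℝ) / ((m + 1) ^ 2 : ℕ)
  have hr : Tendsto r atTop (𝓝 1) := by
    have := (tendsto_natCast_div_add_atTop (1 : ℝ)).pow 2
    simpa [r, div_pow] using this
  have hlow : Tendsto (fun m : ℕ => u (m ^ 2) / ((m + 1) ^ 2 : ℕ)) atTop (𝓝 L) := by
    refine (mul_one L ▸ h.mul hr).congr' ?_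
    filter_upwards [eventually_gt_atTop 0] with m hm
    have : ((m ^ 2 : ℕ) : ℝ) ≠ 0 := by positivity
    simp only [r]
    field_simp
  have hup : Tendsto (fun m : ℕ => u ((m + 1) ^ 2) / (m ^ 2 : ℕ)) atTop (𝓝 L) := by
    refine (div_one L ▸ (h.comp (tendsto_add_atTop_nat 1)).div hr one_ne_zero).congr fun m => ?_
    have : (((m + 1) ^ 2 : ℕ) : ℝ) ≠ 0 := by positivity
    simp only [Pi.div_apply, Function.comp, r]
    rw [div_div_div_cancel_right₀ this]
  have hsqrt : Tendsto Nat.sqrt atTop atTop :=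
    tendsto_atTop_atTop.2 fun k => ⟨k * k, fun n hn => Nat.le_sqrt.2 hn⟩
  refine tendsto_of_tendsto_of_tendsto_of_le_of_le' (hlow.comp hsqrt) (hup.comp hsqrt) ?_ ?_
  all_goals
    filter_upwards [eventually_gt_atTop 0] with n hn
    have hlo : ((n.sqrt ^ 2 : ℕ) : ℝ) ≤ n := by exact_mod_cast Nat.sqrt_le' n
    have hhi : (n : ℝ) ≤ ((n.sqrt + 1) ^ 2 : ℕ) := by exact_mod_cast (Nat.lt_succ_sqrt' n).le
    have hn' : (0 : ℝ) < n := by exact_mod_cast hn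
    simp only [Function.comp]
  · calc u (n.sqrt ^ 2) / ((n.sqrt + 1) ^ 2 : ℕ) ≤ u (n.sqrt ^ 2) / n :=
          div_le_div_of_nonneg_left (hnonneg _) hn' hhi
      _ ≤ u n / n := div_le_div_of_nonneg_right (hu (Nat.sqrt_le' n)) hn'.le
  · have hsq : (0 : ℝ) < (n.sqrt ^ 2 : ℕ) := by
      have : 0 < n.sqrt := Nat.sqrt_pos.2 hn
      positivity
    calc u n / n ≤ u ((n.sqrt + 1) ^ 2) / n :=
          div_le_div_of_nonneg_right (hu (Nat.lt_succ_sqrt' n).le) hn'.le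
      _ ≤ u ((n.sqrt + 1) ^ 2) / (n.sqrt ^ 2 : ℕ) :=
          div_le_div_of_nonneg_left (hnonneg _) hsq hlo

section VarianceStrongLaw

variable {Ω : Type*} [MeasurableSpace Ω] {μ : Measure Ω} [IsFiniteMeasure μ]
  {Y : ℕ → Ω → ℝ} {c : ℕ → ℝ}

lemma ae_eventually_abs_sub_integral_lt (hY : ∀ m, MemLp (Y m) 2 μ) (hc : ∀ m, 0 < c m)
    (hsum : Summable fun m => Var[Y m; μ] / c m ^ 2) {ε : ℝ} (hε : 0 < ε) :
    ∀ᵐ ω ∂μ, ∀ᶠ m in atTop, |Y m ω - μ[Y m]| < ε * c m := by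
  have hcheb : ∀ m, μ {ω | ε * c m ≤ |Y m ω - μ[Y m]|}
      ≤ ENNReal.ofReal ((ε ^ 2)⁻¹ * (Var[Y m; μ] / c m ^ 2)) := by
    intro m
    refine (meas_ge_le_variance_div_sq (hY m) (mul_pos hε (hc m))).trans_eq ?_
    rw [mul_pow, ← div_div, div_eq_inv_mul _ (ε ^ 2)]
    ring_nf
  filter_upwards [ae_eventually_notMem <| ne_top_of_le_ne_top
    (hsum.mul_left _).tsum_ofReal_ne_top (ENNReal.tsum_le_tsum hcheb)] with ω hω
  simpa using hω

lemma ae_tendsto_sub_integral_div (hY : ∀ m, MemLp (Y m) 2 μ) (hc : ∀ m, 0 < c m)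
    (hsum : Summable fun m => Var[Y m; μ] / c m ^ 2) :
    ∀ᵐ ω ∂μ, Tendsto (fun m => (Y m ω - μ[Y m]) / c m) atTop (𝓝 0) := by
  have h := fun j : ℕ => ae_eventually_abs_sub_integral_lt hY hc hsum
    (Nat.one_div_pos_of_nat (n := j))
  filter_upwards [ae_all_iff.2 h] with ω hω
  refine Metric.tendsto_nhds.2 fun ε hε => ?_
  obtain ⟨j, hj⟩ := exists_nat_one_div_lt hε
  filter_upwards [hω j] with m hm
  rw [dist_zero_right, Real.norm_eq_abs, abs_div, abs_of_pos (hc m), div_lt_iff₀ (hc m)]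
  exact hm.trans (mul_lt_mul_of_pos_right hj (hc m))

/-- Chebyshev's inequality and Borel–Cantelli along the squares, then monotone interpolation. -/
theorem ae_tendsto_div_of_monotone_of_variance_le {S : ℕ → Ω → ℝ} (hS : ∀ n, MemLp (S n) 2 μ)
    (hS0 : ∀ ω, 0 ≤ S 0 ω) (hmono : ∀ ω, Monotone (S · ω)) {K L : ℝ}
    (hvar : ∀ n, Var[S n; μ] ≤ K * n)
    (hmean : Tendsto (fun n : ℕ => μ[S n] / (n : ℝ)) atTop (𝓝 L)) :
    ∀ᵐ ω ∂μ, Tendsto (fun n : ℕ => S n ω / (n : ℝ)) atTop (𝓝 L) := by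
  set c : ℕ → ℝ := fun m => ((m + 1) ^ 2 : ℕ)
  have hc : ∀ m, 0 < c m := fun m => by positivity
  have hsum : Summable fun m => Var[S ((m + 1) ^ 2); μ] / c m ^ 2 := by
    refine .of_nonneg_of_le (fun m => div_nonneg (variance_nonneg _ _) (sq_nonneg _))
      (fun m => ?_) (((summable_nat_add_iff 1).2
        (Real.summable_one_div_nat_pow.2 one_lt_two)).mul_left K)
    calc Var[S ((m + 1) ^ 2); μ] / c m ^ 2 ≤ K * c m / c m ^ 2 := by
          gcongr
          exact hvar _
      _ = K * (1 / ((m + 1 : ℕ) : ℝ) ^ 2) := by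
          simp only [c]
          push_cast
          field_simp
  filter_upwards [ae_tendsto_sub_integral_div (fun m => hS _) hc hsum] with ω hω
  refine tendsto_div_of_monotone_of_tendsto_div_sq (hmono ω) (hS0 ω)
    ((tendsto_add_atTop_iff_nat 1).1 ?_)
  have hsq : Tendsto (fun m : ℕ => (m + 1) ^ 2) atTop atTop :=
    (tendsto_pow_atTop two_ne_zero).comp (tendsto_add_atTop_nat 1)
  refine (zero_add L ▸ hω.add (hmean.comp hsq)).congr fun m => ?_
  simp only [Function.comp, c]
  rw [← add_div, sub_add_cancel]

end VarianceStrongLaw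

theorem visit_frequency_strong_law_general
    {X : Type*} [Fintype X] [DecidableEq X]
    [MeasurableSpace X] [MeasurableSingletonClass X]
    (P : X → X → ℝ) (hP : IsStochastic P) (hirr : IsIrreducibleMC P)
    (π : X → ℝ) (hπ : IsStationaryProbVector P π)
    {Ω : Type*} [MeasurableSpace Ω] (μ : Measure Ω) [IsProbabilityMeasure μ]
    (Xs : ℕ → Ω → X) (hchain : IsMarkovChain μ P Xs) (x : X) :
    ∀ᵐ ω ∂μ,
      Tendsto
        (fun W : ℕ =>
          (∑ i ∈ Finset.Icc 1 W, if Xs i ω = x then (1 : ℝ) else 0) / W)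
        atTop (nhds (π x)) := by
  obtain ⟨C, hC⟩ := hirr.exists_abs_sum_pow_apply_sub_le hP hπ
  filter_upwards [ae_tendsto_div_of_monotone_of_variance_le (hchain.memLp_visitCount x)
    (fun ω => (visitCount_zero Xs x ω).ge) (monotone_visitCount Xs x)
    (hchain.variance_visitCount_le hC x) (hchain.tendsto_integral_visitCount_div hC x)]
    with ω hω
  convert hω using 3 with W
  simp [visitCount, Set.indicator_apply, ← Finset.Icc_add_one_left_eq_Ioc]

/-- **Strong law for visit frequencies of an irreducible finite-state Markov chain
(equation (map2)).**  If `P` is an irreducible stochastic matrix on a finite nonempty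
type `X` with stationary probability vector `π`, and `Xs` is a Markov chain with
transition matrix `P` and arbitrary initial distribution, then for every state `x`,
almost surely the empirical visit frequency `W⁻¹ ∑_{i=1}^{W} 1[X_i = x]` converges to
`π x` as `W → ∞`. -/
theorem visit_frequency_strong_law
    {X : Type*} [Fintype X] [Nonempty X] [DecidableEq X]
    [MeasurableSpace X] [MeasurableSingletonClass X]
    (P : X → X → ℝ) (hP : IsStochastic P) (hirr : IsIrreducibleMC P)
    (π : X → ℝ) (hπ : IsStationaryProbVector P π)
    {Ω : Type*} [MeasurableSpace Ω] (μ : Measure Ω) [IsProbabilityMeasure μ]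
    (Xs : ℕ → Ω → X) (hchain : IsMarkovChain μ P Xs) (x : X) :
    ∀ᵐ ω ∂μ,
      Tendsto
        (fun W : ℕ =>
          (∑ i ∈ Finset.Icc 1 W, if Xs i ω = x then (1 : ℝ) else 0) / W)
        atTop (nhds (π x)) :=
  visit_frequency_strong_law_general P hP hirr π hπ μ Xs hchain x
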